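/- arXiv:1309.1968 — 2 statements merged into one kernel-verified Lean document; each statement's English description precedes it below -/
import Mathlib

section
/- In the profinite completion Ĝ = F̂₂ of the free group F₂ = ⟨σ,α⟩, the centralizer of σ is the closed subgroup (topologically) generated by σ; likewise for α. Consequently, if f, f' are elements of the closure of the commutator subgroup [F̂₂, F̂₂] such that f = c₁ f' c₂ with c₁ in the centralizer of α and c₂ in the centralizer of σ, then c₁ = c₂ = 1 and f = f'. -/
/-- The free group on two generators `σ = of 0` and `α = of 1`. -/
abbrev F2 : Type := FreeGroup (Fin 2)

/-- The (normal, finite index) subgroups of `F₂` indexing the profinite completion. -/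
def NFI : Type := {N : Subgroup F2 // N.Normal ∧ N.FiniteIndex}

instance (N : NFI) : N.val.Normal := N.prop.1

instance (N : NFI) : TopologicalSpace (F2 ⧸ N.val) := ⊥

instance (N : NFI) : DiscreteTopology (F2 ⧸ N.val) := ⟨rfl⟩

instance (N : NFI) : IsTopologicalGroup (F2 ⧸ N.val) where
  continuous_mul := continuous_of_discreteTopology
  continuous_inv := continuous_of_discreteTopology

/-- The profinite completion `F̂₂` of `F₂`, realized as the inverse limit of all its finite
quotients `F₂/N`, for `N` normal of finite index, topologized as a subgroup of the product
of the (discrete, finite) quotients. -/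
def fullLimit : Subgroup ((N : NFI) → F2 ⧸ N.val) where
  carrier := {f | ∀ (N M : NFI) (h : N.val ≤ M.val),
    QuotientGroup.map N.val M.val (MonoidHom.id F2) (by simpa using h) (f N) = f M}
  one_mem' := by
    intro N M h
    simp
  mul_mem' := by
    intro a b ha hb N M h
    simp only [Pi.mul_apply, map_mul, ha N M h, hb N M h]
  inv_mem' := by
    intro a ha N M h
    simp only [Pi.inv_apply, map_inv, ha N M h]

/-- The product of the canonical projections `F₂ → F₂/N`. -/
def pif : F2 →* ((N : NFI) → F2 ⧸ N.val) :=
  Pi.monoidHom fun N => QuotientGroup.mk' N.val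

theorem pif_mem (g : F2) : pif g ∈ fullLimit := by
  intro N M h
  rfl

/-- The canonical homomorphism `F₂ → F̂₂`. -/
def toFull : F2 →* ↥fullLimit :=
  MonoidHom.codRestrict pif fullLimit pif_mem

/-!
Let `Q = F₂ ⧸ N` be a finite quotient and `s` the image of `of i`. Let `F₂` act on `Q × ℤ/2`,
with `of i` acting by left multiplication by `s` that flips the `ℤ/2` label whenever the
first coordinate lands on `1`, and the other generator by plain left multiplication. Then
`(of i)^(orderOf s)` moves `(1, 0)` to `(1, 1)` but fixes every point outside `⟨s⟩ × ℤ/2`,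
so an element of `F₂` acting by a permutation that commutes with that of `of i` maps into
`⟨s⟩ ⊆ Q`.
Hence every coordinate of an element of the centralizer of `of i` in `F̂₂` is a power of `s`,
which means it lies in the closure of `⟨of i⟩`.

The exponent sums of `σ` and `α` modulo `m` extend to `F̂₂` and kill the closure of the
commutator subgroup, so `f = c₁ f' c₂` gives `ψ c₁ * ψ c₂ = 1` for each such character `ψ`. The
`σ`-exponent of `c₁ ∈ closure ⟨α⟩` vanishes, hence so does that of `c₂ ∈ closure ⟨σ⟩`
modulo every `m`, which forces `c₂ = 1`; symmetrically `c₁ = 1`.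
-/

open Subgroup

section JumpPerm

variable {Q : Type*} [Group Q] [DecidableEq Q]

def jumpPerm (s : Q) : Equiv.Perm (Q × ZMod 2) where
  toFun p := (s * p.1, if s * p.1 = 1 then p.2 + 1 else p.2)
  invFun p := (s⁻¹ * p.1, if p.1 = 1 then p.2 - 1 else p.2)
  left_inv := by
    rintro ⟨h, k⟩
    by_cases hc : s * h = 1
    · simp [hc, inv_eq_of_mul_eq_one_right hc]
    · simp [hc]
  right_inv := by
    rintro ⟨h, k⟩
    by_cases hc : h = 1 <;> simp [hc]

lemma jumpPerm_apply (s : Q) (p : Q × ZMod 2) :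
    jumpPerm s p = (s * p.1, if s * p.1 = 1 then p.2 + 1 else p.2) := rfl

lemma jumpPerm_pow_apply_of_ne_one (s h : Q) (k : ZMod 2) (n : ℕ)
    (hne : ∀ j, 0 < j → j ≤ n → s ^ j * h ≠ 1) :
    (jumpPerm s ^ n) (h, k) = (s ^ n * h, k) := by
  induction n with
  | zero => simp
  | succ n ih =>
    rw [pow_succ', Equiv.Perm.mul_apply, ih fun j hj hjn => hne j hj (by omega), jumpPerm_apply]
    simp only [← mul_assoc, ← pow_succ', if_neg (hne (n + 1) n.succ_pos le_rfl)]

lemma jumpPerm_pow_orderOf_of_notMem {s h : Q} (hh : h ∉ zpowers s) (k : ZMod 2) :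
    (jumpPerm s ^ orderOf s) (h, k) = (h, k) := by
  rw [jumpPerm_pow_apply_of_ne_one s h k _ fun j _ _ hj => hh ?_, pow_orderOf_eq_one, one_mul]
  exact ⟨-(j : ℤ), by simp [zpow_neg, inv_eq_of_mul_eq_one_right hj]⟩

lemma jumpPerm_pow_orderOf_one {s : Q} (hs : 0 < orderOf s) :
    (jumpPerm s ^ orderOf s) (1, 0) = (1, 1) := by
  obtain ⟨d, hd⟩ : ∃ d, orderOf s = d + 1 := ⟨orderOf s - 1, by omega⟩
  have hne : ∀ j, 0 < j → j ≤ d → s ^ j * 1 ≠ 1 := fun j hj hjd => by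
    rw [mul_one]; exact pow_ne_one_of_lt_orderOf hj.ne' (by omega)
  rw [hd, pow_succ', Equiv.Perm.mul_apply, jumpPerm_pow_apply_of_ne_one s 1 0 d hne,
    jumpPerm_apply]
  simp only [mul_one, ← pow_succ', ← hd, pow_orderOf_eq_one, if_true, zero_add]

end JumpPerm

section JumpRep

variable {α Q : Type*} [DecidableEq α] [Group Q] [DecidableEq Q]

def jumpRep (φ : FreeGroup α →* Q) (i : α) : FreeGroup α →* Equiv.Perm (Q × ZMod 2) :=
  FreeGroup.lift fun j =>
    if j = i then jumpPerm (φ (.of j)) else (Equiv.mulLeft (φ (.of j))).prodCongr (.refl _)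

variable (φ : FreeGroup α →* Q) (i : α)

lemma jumpRep_of_self : jumpRep φ i (.of i) = jumpPerm (φ (.of i)) := by
  simp [jumpRep]

lemma jumpRep_apply_fst (g : FreeGroup α) (p : Q × ZMod 2) :
    (jumpRep φ i g p).1 = φ g * p.1 := by
  induction g generalizing p with
  | C1 => simp
  | of j =>
    by_cases hj : j = i
    · subst hj; simp [jumpRep_of_self, jumpPerm_apply]
    · simp [jumpRep, hj]
  | inv_of j ih =>
    have h := ih ((jumpRep φ i (.of j))⁻¹ p)
    rw [Equiv.Perm.inv_def, Equiv.apply_symm_apply] at h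
    rw [map_inv, map_inv, eq_inv_mul_iff_mul_eq]
    exact h.symm
  | mul g h ihg ihh => rw [map_mul, Equiv.Perm.mul_apply, ihg, ihh, map_mul, mul_assoc]

lemma ker_jumpRep_le_ker : (jumpRep φ i).ker ≤ φ.ker := fun g hg => by
  simpa [MonoidHom.mem_ker.mp hg] using (jumpRep_apply_fst φ i g (1, 0)).symm

lemma mem_zpowers_of_commute_jumpRep [Finite Q] {g : FreeGroup α}
    (hc : Commute (jumpRep φ i g) (jumpRep φ i (.of i))) : φ g ∈ zpowers (φ (.of i)) := by
  by_contra hg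
  set π := jumpPerm (φ (.of i)) ^ orderOf (φ (.of i))
  have hfix : π (jumpRep φ i g (1, 0)) = jumpRep φ i g (1, 0) := by
    rw [← Prod.mk.eta (p := jumpRep φ i g (1, 0)), jumpRep_apply_fst, mul_one]
    exact jumpPerm_pow_orderOf_of_notMem hg _
  have hcomm : π (jumpRep φ i g (1, 0)) = jumpRep φ i g (1, 1) := by
    calc π (jumpRep φ i g (1, 0))
        = (jumpRep φ i (.of i) ^ orderOf (φ (.of i)) * jumpRep φ i g) (1, 0) := by
          rw [jumpRep_of_self]; rfl
      _ = (jumpRep φ i g * jumpRep φ i (.of i) ^ orderOf (φ (.of i))) (1, 0) := by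
          rw [(hc.pow_right _).eq]
      _ = jumpRep φ i g (1, 1) := by
          rw [Equiv.Perm.mul_apply, jumpRep_of_self,
            jumpPerm_pow_orderOf_one (orderOf_pos (φ (.of i)))]
  have h01 := congrArg Prod.snd ((jumpRep φ i g).injective (hcomm.symm.trans hfix))
  exact absurd h01 (by decide : (1 : ZMod 2) ≠ 0)

end JumpRep

namespace NFI

instance (N : NFI) : N.val.FiniteIndex := N.prop.2

def inf (N M : NFI) : NFI := ⟨N.val ⊓ M.val, inferInstance, inferInstance⟩

def ker {Q : Type*} [Group Q] [Finite Q] (φ : F2 →* Q) : NFI :=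
  ⟨φ.ker, inferInstance, inferInstance⟩

lemma exists_le_of_finset (I : Finset NFI) : ∃ M : NFI, ∀ K ∈ I, M.val ≤ K.val := by
  classical
  induction I using Finset.induction_on with
  | empty => exact ⟨⟨⊤, inferInstance, inferInstance⟩, by simp⟩
  | insert N I _ ih =>
    obtain ⟨M, hM⟩ := ih
    refine ⟨N.inf M, ?_⟩
    simp only [Finset.mem_insert, forall_eq_or_imp]
    exact ⟨inf_le_left, fun K hK => inf_le_right.trans (hM K hK)⟩

end NFI

namespace fullLimit

lemma coord_eq_mk_of_le {x : ↥fullLimit} {N M : NFI} {g : F2}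
    (hx : x.1 N = QuotientGroup.mk g) (hNM : N.val ≤ M.val) : x.1 M = QuotientGroup.mk g := by
  rw [← x.2 N M hNM, hx]
  rfl

lemma toFull_coord (g : F2) (N : NFI) : (toFull g).1 N = QuotientGroup.mk g := rfl

lemma continuous_coord (N : NFI) : Continuous fun x : ↥fullLimit => x.1 N :=
  (continuous_apply N).comp continuous_subtype_val

lemma mem_closure_image_toFull {S : Set F2} {x : ↥fullLimit}
    (hx : ∀ N : NFI, ∃ g ∈ S, x.1 N = QuotientGroup.mk g) :
    x ∈ _root_.closure (toFull '' S) := by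
  rw [mem_closure_iff]
  intro o ho hxo
  obtain ⟨V, hV, rfl⟩ := isOpen_induced_iff.mp ho
  obtain ⟨I, u, hIu, hsub⟩ := isOpen_pi_iff.mp hV _ hxo
  obtain ⟨M, hM⟩ := NFI.exists_le_of_finset I
  obtain ⟨g, hgS, hg⟩ := hx M
  refine ⟨toFull g, hsub fun K hK => ?_, g, hgS, rfl⟩
  rw [toFull_coord, ← coord_eq_mk_of_le hg (hM K hK)]
  exact (hIu K hK).2

open scoped Classical in
lemma exists_coord_eq_mk_zpow_of_mem_centralizer {x : ↥fullLimit} {i : Fin 2}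
    (hx : x ∈ centralizer {toFull (.of i)}) (N : NFI) :
    ∃ t : ℤ, x.1 N = QuotientGroup.mk (.of i ^ t) := by
  let ρ := jumpRep (QuotientGroup.mk' N.val) i
  obtain ⟨g, hg⟩ := QuotientGroup.mk_surjective (x.1 (NFI.ker ρ))
  have hcomm : Commute (ρ g) (ρ (.of i)) := by
    have h := congrArg (fun y : ↥fullLimit => y.1 (NFI.ker ρ))
      (mem_centralizer_iff.mp hx (toFull (.of i)) rfl)
    simp only [Subgroup.coe_mul, Pi.mul_apply, toFull_coord, ← hg, ← QuotientGroup.mk_mul] at h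
    have h' : ρ ((.of i * g)⁻¹ * (g * .of i)) = 1 := QuotientGroup.eq.mp h
    rw [map_mul, map_inv, inv_mul_eq_one, map_mul, map_mul] at h'
    exact h'.symm
  obtain ⟨t, ht⟩ := mem_zpowers_iff.mp (mem_zpowers_of_commute_jumpRep _ i hcomm)
  refine ⟨t, ?_⟩
  have hle : (NFI.ker ρ).val ≤ N.val :=
    (ker_jumpRep_le_ker _ i).trans (QuotientGroup.ker_mk' N.val).le
  rw [coord_eq_mk_of_le hg.symm hle, QuotientGroup.mk_zpow]
  exact ht.symm

lemma centralizer_eq_topologicalClosure_zpowers (i : Fin 2) :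
    centralizer {toFull (.of i)} = (zpowers (toFull (.of i))).topologicalClosure := by
  refine le_antisymm (fun x hx => ?_) ?_
  · rw [← SetLike.mem_coe, Subgroup.topologicalClosure_coe, ← MonoidHom.map_zpowers,
      Subgroup.coe_map]
    refine mem_closure_image_toFull fun N => ?_
    obtain ⟨t, ht⟩ := exists_coord_eq_mk_zpow_of_mem_centralizer hx N
    exact ⟨.of i ^ t, zpow_mem_zpowers _ _, ht⟩
  · refine topologicalClosure_minimal _ ?_ (Set.isClosed_centralizer _)
    rw [zpowers_le, mem_centralizer_singleton_iff]

section LiftFin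

variable {Q : Type*} [Group Q] [Finite Q] (φ : F2 →* Q)

/-- The continuous extension of `φ` to `F̂₂`. -/
noncomputable def liftFin : ↥fullLimit →* Q :=
  (QuotientGroup.kerLift φ).comp ((Pi.evalMonoidHom _ (NFI.ker φ)).comp fullLimit.subtype)

lemma liftFin_eq_of_coord_eq {x : ↥fullLimit} {N : NFI} {g : F2}
    (hx : x.1 N = QuotientGroup.mk g) (hN : N.val ≤ φ.ker) : liftFin φ x = φ g := by
  change QuotientGroup.kerLift φ (x.1 (NFI.ker φ)) = φ g
  rw [coord_eq_mk_of_le hx hN]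
  rfl

lemma isClosed_ker_liftFin : IsClosed ((liftFin φ).ker : Set ↥fullLimit) :=
  (isClosed_discrete (α := F2 ⧸ (NFI.ker φ).val) (QuotientGroup.kerLift φ ⁻¹' {1})).preimage
    (continuous_coord (NFI.ker φ))

lemma liftFin_mem_zpowers_of_mem_centralizer {x : ↥fullLimit} {i : Fin 2}
    (hx : x ∈ centralizer {toFull (.of i)}) : liftFin φ x ∈ zpowers (φ (.of i)) := by
  obtain ⟨t, ht⟩ := exists_coord_eq_mk_zpow_of_mem_centralizer hx (NFI.ker φ)
  rw [liftFin_eq_of_coord_eq φ ht le_rfl, map_zpow]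
  exact zpow_mem_zpowers _ _

end LiftFin

lemma liftFin_eq_one_of_mem_closure_commutator {A : Type*} [CommGroup A] [Finite A]
    (φ : F2 →* A) {x : ↥fullLimit} (hx : x ∈ (commutator ↥fullLimit).topologicalClosure) :
    liftFin φ x = 1 :=
  topologicalClosure_minimal _ (Abelianization.commutator_subset_ker _) (isClosed_ker_liftFin φ) hx

end fullLimit

section ExponentSum

variable {α : Type*} [DecidableEq α]

def exponentSumMod (m : ℕ) (i : α) : FreeGroup α →* Multiplicative (ZMod m) :=
  FreeGroup.lift fun j => if j = i then .ofAdd 1 else 1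

lemma exponentSumMod_of_self (m : ℕ) (i : α) :
    exponentSumMod m i (.of i) = .ofAdd 1 := by
  simp [exponentSumMod]

lemma exponentSumMod_of_of_ne (m : ℕ) {i j : α} (hij : j ≠ i) :
    exponentSumMod m i (.of j) = 1 := by
  simp [exponentSumMod, hij]

end ExponentSum

namespace fullLimit

lemma liftFin_exponentSumMod_eq_one_of_mem_centralizer (m : ℕ) [NeZero m] {i j : Fin 2}
    (hij : j ≠ i) {x : ↥fullLimit} (hx : x ∈ centralizer {toFull (.of j)}) :
    liftFin (exponentSumMod m i) x = 1 := by
  simpa [exponentSumMod_of_of_ne m hij] using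
    liftFin_mem_zpowers_of_mem_centralizer (exponentSumMod m i) hx

/-- Taking `m` to be the order of `of i` in `F₂ ⧸ N`, the exponent sum mod `m` of `x` reduces
the exponent `t` with `x_N = (of i)^t`, so its vanishing forces `x_N = 1`. -/
lemma eq_one_of_mem_centralizer_of_liftFin_exponentSumMod {x : ↥fullLimit} {i : Fin 2}
    (hx : x ∈ centralizer {toFull (.of i)})
    (hexp : ∀ (m : ℕ) [NeZero m], liftFin (exponentSumMod m i) x = 1) : x = 1 := by
  refine Subtype.ext (funext fun N => ?_)
  set m := orderOf (QuotientGroup.mk (.of i) : F2 ⧸ N.val)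
  have : NeZero m := ⟨(orderOf_pos _).ne'⟩
  obtain ⟨t, ht⟩ :=
    exists_coord_eq_mk_zpow_of_mem_centralizer hx (N.inf (NFI.ker (exponentSumMod m i)))
  have htm : (t : ZMod m) = 0 := by
    have h := hexp m
    rwa [liftFin_eq_of_coord_eq _ ht inf_le_right, map_zpow, exponentSumMod_of_self,
      ← ofAdd_zsmul, ofAdd_eq_one, zsmul_one] at h
  rw [coord_eq_mk_of_le ht inf_le_left, QuotientGroup.mk_zpow,
    orderOf_dvd_iff_zpow_eq_one.mp ((ZMod.intCast_zmod_eq_zero_iff_dvd t m).mp htm)]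
  rfl

end fullLimit

open fullLimit in
/-- In the profinite completion `F̂₂` of the free group on `σ, α`, the centralizer of `σ` is
the closed subgroup topologically generated by `σ`, and likewise for `α`. Consequently, if
`f, f'` lie in the closure of the commutator subgroup of `F̂₂` and `f = c₁ f' c₂` with `c₁`
centralizing `α` and `c₂` centralizing `σ`, then `c₁ = c₂ = 1` and `f = f'`. -/
theorem centralizer_in_profinite_free_group :
    (Subgroup.centralizer {toFull (FreeGroup.of 0)} =
        (Subgroup.zpowers (toFull (FreeGroup.of 0))).topologicalClosure) ∧
    (Subgroup.centralizer {toFull (FreeGroup.of 1)} =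
        (Subgroup.zpowers (toFull (FreeGroup.of 1))).topologicalClosure) ∧
    (∀ f f' : ↥fullLimit,
      f ∈ (commutator ↥fullLimit).topologicalClosure →
      f' ∈ (commutator ↥fullLimit).topologicalClosure →
      ∀ c₁ ∈ Subgroup.centralizer {toFull (FreeGroup.of 1)},
      ∀ c₂ ∈ Subgroup.centralizer {toFull (FreeGroup.of 0)},
      f = c₁ * f' * c₂ → c₁ = 1 ∧ c₂ = 1 ∧ f = f') := by
  refine ⟨centralizer_eq_topologicalClosure_zpowers 0,
    centralizer_eq_topologicalClosure_zpowers 1, fun f f' hf hf' c₁ hc₁ c₂ hc₂ heq => ?_⟩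
  have hsplit : ∀ (m : ℕ) [NeZero m] (i : Fin 2),
      liftFin (exponentSumMod m i) c₁ * liftFin (exponentSumMod m i) c₂ = 1 := fun m _ i => by
    simpa [liftFin_eq_one_of_mem_closure_commutator _ hf,
      liftFin_eq_one_of_mem_closure_commutator _ hf'] using
      (congrArg (liftFin (exponentSumMod m i)) heq).symm
  have h₂ : c₂ = 1 := eq_one_of_mem_centralizer_of_liftFin_exponentSumMod hc₂ fun m _ => by
    simpa [liftFin_exponentSumMod_eq_one_of_mem_centralizer m (i := 0) (by decide) hc₁] using
      hsplit m 0
  have h₁ : c₁ = 1 := eq_one_of_mem_centralizer_of_liftFin_exponentSumMod hc₁ fun m _ => by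
    simpa [liftFin_exponentSumMod_eq_one_of_mem_centralizer m (i := 1) (by decide) hc₂] using
      hsplit m 1
  exact ⟨h₁, h₂, by rw [heq, h₁, h₂, one_mul, mul_one]⟩
end

section
/- Let X be a finite set of cardinality n equipped with permutations σ, α, φ satisfying σαφ = 1, such that the subgroup G = ⟨σ,α⟩ of S(X) acts transitively. Define the Euler characteristic χ = n_σ + n_α + n_φ − n, where n_σ, n_α, n_φ are the numbers of cycles (orbits) of σ, α, φ respectively on X. Then χ is even and χ ≤ 2. -/
/-!
Multiplying a permutation by a transposition `(a b)` changes its number of cycles by exactly one: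
it splits the cycle through `a` and `b` if there is one, and otherwise joins the two cycles through
them. Hence `sign g = (-1) ^ (n + n_g)`, and `σ α φ = 1` makes `χ` even.

The bound follows from `n_σ + n_α + n_φ ≤ n + 2 c`, where `c` is the number of orbits of `⟨σ, α⟩`,
by induction on `n - n_α`: split a cycle of `α` by `t = (a b)`, i.e. pass to `α' = α t` and
`φ' = t φ`. If `a` and `b` remain in one orbit of `⟨σ, α'⟩`, then `c` does not grow and
`n_φ ≤ n_φ' + 1`; otherwise `c` grows by one, but then `a` and `b` lie in different cycles of
`φ' ∈ ⟨σ, α'⟩`, so `n_φ = n_φ' - 1`.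
-/

/-- The number of cycles (orbits) of a permutation `g` on `X`. -/
noncomputable def nOrbits {X : Type*} (g : Equiv.Perm X) : ℕ :=
  Nat.card (MulAction.orbitRel.Quotient (Subgroup.zpowers g) X)

open Equiv Equiv.Perm MulAction Subgroup

theorem Nat.card_le_card_add_one_of_forall_ne_mem_range {A B : Type*} [Finite B] {f : B → A}
    {a₀ : A} (h : ∀ a, a ≠ a₀ → a ∈ Set.range f) : Nat.card A ≤ Nat.card B + 1 := by
  have hsub : Set.univ ⊆ insert a₀ (Set.range f) := fun a _ => by
    by_cases ha : a = a₀
    · exact .inl ha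
    · exact .inr (h a ha)
  calc Nat.card A = (Set.univ : Set A).ncard := (Set.ncard_univ A).symm
    _ ≤ (insert a₀ (Set.range f)).ncard := Set.ncard_le_ncard hsub ((Set.finite_range f).insert a₀)
    _ ≤ (Set.range f).ncard + 1 := Set.ncard_insert_le _ _
    _ ≤ Nat.card B + 1 := by
      rw [← Nat.card_coe_set_eq]
      exact Nat.add_le_add_right (Nat.card_le_card_of_surjective _ Set.rangeFactorization_surjective) 1

theorem Nat.card_lt_card_of_surjective_of_not_injective {A B : Type*} [Finite A] {f : A → B}
    (hf : Function.Surjective f) (hinj : ¬ Function.Injective f) : Nat.card B < Nat.card A :=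
  (Nat.card_le_card_of_surjective f hf).lt_of_ne fun h =>
    hinj ((Nat.bijective_iff_surjective_and_card f).mpr ⟨hf, h.symm⟩).1

namespace Subgroup

variable {G : Type*} [Group G]

theorem closure_pair (g h : G) : closure {g, h} = zpowers g ⊔ zpowers h := by
  rw [Set.insert_eq, closure_union, zpowers_eq_closure, zpowers_eq_closure]

theorem zpowers_mul_sup_zpowers (g h : G) : zpowers (g * h) ⊔ zpowers h = zpowers g ⊔ zpowers h := by
  refine le_antisymm (sup_le ?_ le_sup_right) (sup_le ?_ le_sup_right) <;> rw [zpowers_le]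
  · exact mul_mem (mem_sup_left (mem_zpowers g)) (mem_sup_right (mem_zpowers h))
  · simpa using mul_mem (mem_sup_left (mem_zpowers (g * h))) (mem_sup_right (inv_mem (mem_zpowers h)))

end Subgroup

section OrbitCount

variable {G : Type*} [Group G]

noncomputable def orbitCount (H : Subgroup G) (X : Type*) [MulAction G X] : ℕ :=
  Nat.card (orbitRel.Quotient H X)

variable {X : Type*} [MulAction G X]

theorem orbitRel_mono {H K : Subgroup G} (hHK : H ≤ K) : orbitRel H X ≤ orbitRel K X := by
  rintro x y ⟨⟨g, hg⟩, rfl⟩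
  exact ⟨⟨g, hHK hg⟩, rfl⟩

theorem orbitCount_antitone [Finite X] {H K : Subgroup G} (hHK : H ≤ K) :
    orbitCount K X ≤ orbitCount H X :=
  Nat.card_le_card_of_surjective (Quotient.map' id (orbitRel_mono hHK)) <| by
    rintro ⟨x⟩
    exact ⟨⟦x⟧, rfl⟩

theorem orbitCount_lt_of_le [Finite X] {H K : Subgroup G} (hHK : H ≤ K) {a b : X}
    (hK : orbitRel K X a b) (hH : ¬ orbitRel H X a b) : orbitCount K X < orbitCount H X := by
  refine Nat.card_lt_card_of_surjective_of_not_injective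
    (f := Quotient.map' id (orbitRel_mono hHK)) (by rintro ⟨x⟩; exact ⟨⟦x⟧, rfl⟩) fun hinj => ?_
  exact hH (Quotient.exact (hinj (Quotient.sound hK : (⟦a⟧ : orbitRel.Quotient K X) = ⟦b⟧)))

theorem orbitCount_le_one (H : Subgroup G) [IsPretransitive H X] : orbitCount H X ≤ 1 :=
  have := (pretransitive_iff_subsingleton_quotient H X).mp inferInstance
  Finite.card_le_one_iff_subsingleton.mpr this

end OrbitCount

namespace Equiv.Perm

variable {X : Type*}

section Basic

def invariantsSubgroup {Y : Type*} (f : X → Y) : Subgroup (Perm X) where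
  carrier := {g | ∀ x, f (g x) = f x}
  one_mem' _ := rfl
  mul_mem' hg hh x := (hg _).trans (hh x)
  inv_mem' {g} hg x := by simpa using (hg (g⁻¹ x)).symm

theorem orbitRel_le_ker {Y : Type*} {f : X → Y} {K : Subgroup (Perm X)}
    (hK : K ≤ invariantsSubgroup f) : orbitRel K X ≤ Setoid.ker f := by
  rintro x y ⟨⟨g, hg⟩, rfl⟩
  exact hK hg y

theorem orbitRel_zpowers_iff {g : Perm X} {x y : X} :
    orbitRel (zpowers g) X x y ↔ g.SameCycle x y := by
  rw [sameCycle_comm, orbitRel_apply, mem_orbit_iff]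
  constructor
  · rintro ⟨⟨h, k, rfl⟩, rfl⟩
    exact ⟨k, rfl⟩
  · rintro ⟨k, rfl⟩
    exact ⟨⟨g ^ k, k, rfl⟩, rfl⟩

theorem SameCycle.orbitRel_of_mem {g : Perm X} {H : Subgroup (Perm X)} (hg : g ∈ H) {x y : X}
    (h : g.SameCycle x y) : orbitRel H X x y :=
  orbitRel_mono (zpowers_le.mpr hg) (orbitRel_zpowers_iff.mpr h)

theorem orbitCount_zpowers (g : Perm X) : orbitCount (zpowers g) X = nOrbits g := rfl

theorem nOrbits_one : nOrbits (1 : Perm X) = Nat.card X :=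
  (Nat.card_eq_of_bijective _ ⟨fun _ _ hxy => sameCycle_one.mp
    (orbitRel_zpowers_iff.mp (Quotient.exact hxy)), Quotient.mk_surjective⟩).symm

theorem nOrbits_inv (g : Perm X) : nOrbits g⁻¹ = nOrbits g := by
  rw [nOrbits, zpowers_inv, nOrbits]

theorem nOrbits_le_card [Finite X] (g : Perm X) : nOrbits g ≤ Nat.card X :=
  Nat.card_le_card_of_surjective _ Quotient.mk_surjective

end Basic

section Merge

variable [DecidableEq X]

open scoped Classical in
/-- Its kernel is the orbit relation of `H` with the orbits of `a` and `b` merged. -/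
noncomputable def mergedMk (H : Subgroup (Perm X)) (a b : X) : X → orbitRel.Quotient H X :=
  fun x => if (⟦x⟧ : orbitRel.Quotient H X) = ⟦b⟧ then ⟦a⟧ else ⟦x⟧

theorem sup_zpowers_swap_le_invariantsSubgroup (H : Subgroup (Perm X)) (a b : X) :
    H ⊔ zpowers (swap a b) ≤ invariantsSubgroup (mergedMk H a b) := by
  refine sup_le (fun h hh x => ?_) (zpowers_le.mpr fun x => ?_)
  · have : (⟦h x⟧ : orbitRel.Quotient H X) = ⟦x⟧ := Quotient.sound ⟨⟨h, hh⟩, rfl⟩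
    simp only [mergedMk]
    rw [this]
  · rcases eq_or_ne x a with rfl | hxa
    · simp [mergedMk]
    rcases eq_or_ne x b with rfl | hxb
    · simp [mergedMk]
    · rw [swap_apply_of_ne_of_ne hxa hxb]

theorem orbitCount_sup_zpowers_swap_of_rel {H : Subgroup (Perm X)} {a b : X}
    (h : orbitRel H X a b) : orbitCount (H ⊔ zpowers (swap a b)) X = orbitCount H X := by
  have hmerged : mergedMk H a b = Quotient.mk _ := by
    funext x
    have : (⟦a⟧ : orbitRel.Quotient H X) = ⟦b⟧ := Quotient.sound h
    by_cases hx : (⟦x⟧ : orbitRel.Quotient H X) = ⟦b⟧ <;> simp [mergedMk, hx, this]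
  have hle := orbitRel_le_ker (sup_zpowers_swap_le_invariantsSubgroup H a b)
  rw [hmerged, Setoid.ker_mk_eq] at hle
  unfold orbitCount orbitRel.Quotient
  rw [le_antisymm hle (orbitRel_mono le_sup_left)]

variable [Finite X]

theorem orbitCount_le_orbitCount_sup_zpowers_swap_add_one (H : Subgroup (Perm X)) (a b : X) :
    orbitCount H X ≤ orbitCount (H ⊔ zpowers (swap a b)) X + 1 := by
  let F : orbitRel.Quotient ↥(H ⊔ zpowers (swap a b)) X → orbitRel.Quotient H X :=
    Quotient.lift (mergedMk H a b) (orbitRel_le_ker (sup_zpowers_swap_le_invariantsSubgroup H a b))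
  refine Nat.card_le_card_add_one_of_forall_ne_mem_range (f := F) (a₀ := ⟦b⟧) fun q hq => ?_
  obtain ⟨x, rfl⟩ := Quotient.mk_surjective q
  exact ⟨⟦x⟧, if_neg hq⟩

theorem orbitCount_sup_zpowers_swap_add_one_of_not_rel {H : Subgroup (Perm X)} {a b : X}
    (h : ¬ orbitRel H X a b) : orbitCount (H ⊔ zpowers (swap a b)) X + 1 = orbitCount H X := by
  have hswap : orbitRel ↥(H ⊔ zpowers (swap a b)) X a b :=
    ⟨⟨swap a b, mem_sup_right (mem_zpowers _)⟩, swap_apply_right a b⟩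
  have := orbitCount_lt_of_le le_sup_left hswap h
  have := orbitCount_le_orbitCount_sup_zpowers_swap_add_one H a b
  omega

end Merge

section SwapCycles

theorem SameCycle.exists_pow_eq_of_pow_apply_eq_self [Finite X] {g : Perm X} {x y : X} {m : ℕ}
    (hm : 0 < m) (hx : (g ^ m) x = x) (h : g.SameCycle x y) : ∃ i < m, (g ^ i) x = y := by
  obtain ⟨i, rfl⟩ := h.exists_nat_pow_eq
  have hper : Function.IsPeriodicPt g m x := by
    rw [Function.IsPeriodicPt, Function.IsFixedPt, iterate_eq_pow, hx]
  refine ⟨i % m, Nat.mod_lt i hm, ?_⟩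
  simpa only [iterate_eq_pow] using hper.iterate_mod_apply i

variable [DecidableEq X]

theorem pow_mul_swap_apply_right {g : Perm X} {a b : X} {m : ℕ}
    (hm : ∀ i, 0 < i → i < m → (g ^ i) a ≠ a ∧ (g ^ i) a ≠ b) {j : ℕ} (hj : 0 < j) (hjm : j ≤ m) :
    ((g * swap a b) ^ j) b = (g ^ j) a := by
  induction j, hj using Nat.le_induction with
  | base => simp
  | succ j hj ih =>
    obtain ⟨hja, hjb⟩ := hm j hj (by omega)
    rw [pow_succ', mul_apply, ih (by omega), mul_apply, swap_apply_of_ne_of_ne hja hjb,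
      ← mul_apply, ← pow_succ']

theorem nOrbits_swap_mul (g : Perm X) (a b : X) :
    nOrbits (swap a b * g) = nOrbits (g⁻¹ * swap a b) := by
  rw [← nOrbits_inv, mul_inv_rev, swap_inv]

variable [Finite X]

/-- Let `m > 0` be the first time the `g`-orbit of `a` returns to `{a, b}`. Up to then
`g * swap a b` moves `b` along the same points, so `(g * swap a b) ^ m` sends `b` to `g ^ m a`. -/
theorem sameCycle_mul_swap_iff {g : Perm X} {a b : X} (hab : a ≠ b) :
    (g * swap a b).SameCycle a b ↔ ¬ g.SameCycle a b := by
  have hex : ∃ k, 0 < k ∧ ((g ^ k) a = a ∨ (g ^ k) a = b) :=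
    ⟨orderOf g, orderOf_pos g, .inl (by rw [pow_orderOf_eq_one, one_apply])⟩
  obtain ⟨hm, hhit⟩ := Nat.find_spec hex
  have hmiss : ∀ i, 0 < i → i < Nat.find hex → (g ^ i) a ≠ a ∧ (g ^ i) a ≠ b :=
    fun i hi him => not_or.mp fun h => Nat.find_min hex him ⟨hi, h⟩
  have hiter := pow_mul_swap_apply_right hmiss hm le_rfl
  rcases hhit with hma | hmb
  · refine iff_of_true (SameCycle.symm ⟨Nat.find hex, by rw [zpow_natCast, hiter, hma]⟩) ?_
    rintro hsame
    obtain ⟨i, him, hi⟩ := hsame.exists_pow_eq_of_pow_apply_eq_self hm hma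
    rcases Nat.eq_zero_or_pos i with rfl | hi0
    · exact hab hi
    · exact (hmiss i hi0 him).2 hi
  · refine iff_of_false (fun hsame => ?_) (not_not.mpr ⟨Nat.find hex, by rw [zpow_natCast, hmb]⟩)
    obtain ⟨i, him, hi⟩ := hsame.symm.exists_pow_eq_of_pow_apply_eq_self hm (hiter.trans hmb)
    rcases Nat.eq_zero_or_pos i with rfl | hi0
    · exact hab hi.symm
    · rw [pow_mul_swap_apply_right hmiss hi0 him.le] at hi
      exact (hmiss i hi0 him).1 hi

theorem nOrbits_mul_swap_le (g : Perm X) (a b : X) : nOrbits (g * swap a b) ≤ nOrbits g + 1 := by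
  have h := orbitCount_le_orbitCount_sup_zpowers_swap_add_one (zpowers (g * swap a b)) a b
  rw [zpowers_mul_sup_zpowers] at h
  exact h.trans (Nat.add_le_add_right (orbitCount_antitone le_sup_left) 1)

/-- `g` and `g * swap a b` generate the same group with `swap a b`; its orbits are those of `g`,
and those of `g * swap a b` with the cycles through `a` and `b` merged. -/
theorem nOrbits_mul_swap_of_sameCycle {g : Perm X} {a b : X} (hab : a ≠ b) (h : g.SameCycle a b) :
    nOrbits (g * swap a b) = nOrbits g + 1 := by
  have hsplit : ¬ (g * swap a b).SameCycle a b := fun h' => (sameCycle_mul_swap_iff hab).mp h' h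
  have hg := orbitCount_sup_zpowers_swap_of_rel (orbitRel_zpowers_iff.mpr h)
  have hgt := orbitCount_sup_zpowers_swap_add_one_of_not_rel (mt orbitRel_zpowers_iff.mp hsplit)
  rw [zpowers_mul_sup_zpowers, hg] at hgt
  exact hgt.symm

theorem nOrbits_mul_swap_of_not_sameCycle {g : Perm X} {a b : X} (hab : a ≠ b)
    (h : ¬ g.SameCycle a b) : nOrbits (g * swap a b) + 1 = nOrbits g := by
  simpa only [mul_swap_mul_self] using
    (nOrbits_mul_swap_of_sameCycle hab ((sameCycle_mul_swap_iff hab).mpr h)).symm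

theorem nOrbits_swap_mul_le (g : Perm X) (a b : X) : nOrbits (swap a b * g) ≤ nOrbits g + 1 := by
  rw [nOrbits_swap_mul, ← nOrbits_inv g]
  exact nOrbits_mul_swap_le g⁻¹ a b

theorem nOrbits_swap_mul_of_not_sameCycle {g : Perm X} {a b : X} (hab : a ≠ b)
    (h : ¬ g.SameCycle a b) : nOrbits (swap a b * g) + 1 = nOrbits g := by
  rw [nOrbits_swap_mul, ← nOrbits_inv g]
  exact nOrbits_mul_swap_of_not_sameCycle hab (mt sameCycle_inv.mp h)

end SwapCycles

section EulerCharacteristic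

variable [DecidableEq X] [Finite X]

theorem sign_eq_neg_one_pow_card_add_nOrbits [Fintype X] (g : Perm X) :
    sign g = (-1) ^ (Nat.card X + nOrbits g) := by
  induction g using swap_induction_on' with
  | one => rw [sign_one, nOrbits_one, ← two_mul, (even_two_mul _).neg_one_pow]
  | mul_swap f a b hab ih =>
    rw [sign_mul, sign_swap hab, ih]
    by_cases h : f.SameCycle a b
    · rw [nOrbits_mul_swap_of_sameCycle hab h, ← add_assoc, pow_succ]
    · rw [← nOrbits_mul_swap_of_not_sameCycle hab h, ← add_assoc, pow_succ, mul_assoc,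
        neg_one_mul, neg_neg, mul_one]

theorem even_nOrbits_add_card {σ α φ : Perm X} (h : σ * α * φ = 1) :
    Even (nOrbits σ + nOrbits α + nOrbits φ + Nat.card X) := by
  have := Fintype.ofFinite X
  have hsign := congrArg sign h
  rw [sign_mul, sign_mul, sign_one, sign_eq_neg_one_pow_card_add_nOrbits,
    sign_eq_neg_one_pow_card_add_nOrbits, sign_eq_neg_one_pow_card_add_nOrbits, ← pow_add,
    ← pow_add, neg_one_pow_eq_one_iff_even (by decide)] at hsign
  have : nOrbits σ + nOrbits α + nOrbits φ + Nat.card X + 2 * Nat.card X =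
      Nat.card X + nOrbits σ + (Nat.card X + nOrbits α) + (Nat.card X + nOrbits φ) := by ring
  rw [← this] at hsign
  exact (Nat.even_add.mp hsign).mpr (even_two_mul _)

theorem nOrbits_swap_mul_add_two_mul_orbitCount_le {H : Subgroup (Perm X)} {φ : Perm X}
    (hφ : φ ∈ H) {a b : X} (hab : a ≠ b) :
    nOrbits (swap a b * φ) + 2 * orbitCount H X ≤
      nOrbits φ + 1 + 2 * orbitCount (H ⊔ zpowers (swap a b)) X := by
  by_cases hrel : orbitRel H X a b
  · have := orbitCount_sup_zpowers_swap_of_rel hrel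
    have := nOrbits_swap_mul_le φ a b
    omega
  · have := orbitCount_sup_zpowers_swap_add_one_of_not_rel hrel
    have := nOrbits_swap_mul_of_not_sameCycle hab fun hc => hrel (hc.orbitRel_of_mem hφ)
    omega

theorem nOrbits_add_le_card_add_two_mul_orbitCount (σ α φ : Perm X) (h : σ * α * φ = 1) :
    nOrbits σ + nOrbits α + nOrbits φ ≤ Nat.card X + 2 * orbitCount (zpowers σ ⊔ zpowers α) X := by
  by_cases hα : α = 1
  · subst hα
    rw [mul_one] at h
    rw [eq_inv_of_mul_eq_one_right h, nOrbits_inv, nOrbits_one, zpowers_one_eq_bot, sup_bot_eq,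
      orbitCount_zpowers]
    omega
  obtain ⟨a, ha⟩ : ∃ a, α a ≠ a := by
    by_contra! hfix
    exact hα (Equiv.ext hfix)
  have hab : a ≠ α a := ha.symm
  set t := swap a (α a)
  have hsplit : nOrbits (α * t) = nOrbits α + 1 :=
    nOrbits_mul_swap_of_sameCycle hab (sameCycle_apply_right.mpr (SameCycle.refl α a))
  have h' : σ * (α * t) * (t * φ) = 1 := by
    rw [← h, mul_assoc, mul_assoc, swap_mul_self_mul, ← mul_assoc]
  have ih := nOrbits_add_le_card_add_two_mul_orbitCount σ (α * t) (t * φ) h'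
  have hmem : t * φ ∈ zpowers σ ⊔ zpowers (α * t) := by
    rw [eq_inv_of_mul_eq_one_right h']
    exact inv_mem (mul_mem (mem_sup_left (mem_zpowers σ)) (mem_sup_right (mem_zpowers _)))
  have hcut := nOrbits_swap_mul_add_two_mul_orbitCount_le hmem hab
  rw [swap_mul_self_mul, sup_assoc, zpowers_mul_sup_zpowers, ← sup_assoc] at hcut
  have hsup := orbitCount_antitone (X := X) (le_sup_left : zpowers σ ⊔ zpowers α ≤ _ ⊔ zpowers t)
  omega
termination_by Nat.card X - nOrbits α
decreasing_by
  change Nat.card X - nOrbits (α * t) < Nat.card X - nOrbits α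
  have := nOrbits_le_card (α * t)
  omega

end EulerCharacteristic

end Equiv.Perm

theorem euler_char_even_le_two_general {X : Type*} [Finite X]
    (σ α φ : Equiv.Perm X) (hprod : σ * α * φ = 1)
    (htrans : ∀ x y : X, ∃ g ∈ Subgroup.closure ({σ, α} : Set (Equiv.Perm X)), g x = y) :
    Even ((nOrbits σ + nOrbits α + nOrbits φ : ℤ) - Nat.card X) ∧
      (nOrbits σ + nOrbits α + nOrbits φ : ℤ) - Nat.card X ≤ 2 := by
  classical
  have : IsPretransitive ↥(zpowers σ ⊔ zpowers α) X := ⟨fun x y => by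
    obtain ⟨g, hg, rfl⟩ := htrans x y
    exact ⟨⟨g, closure_pair σ α ▸ hg⟩, rfl⟩⟩
  have hc := orbitCount_le_one (zpowers σ ⊔ zpowers α) (X := X)
  have hle := nOrbits_add_le_card_add_two_mul_orbitCount σ α φ hprod
  obtain ⟨k, hk⟩ := even_nOrbits_add_card hprod
  exact ⟨⟨k - Nat.card X, by omega⟩, by omega⟩

/-- Let `X` be a finite set of cardinality `n` with permutations `σ, α, φ` satisfying
`σαφ = 1`, such that the subgroup generated by `σ` and `α` acts transitively. Then the
Euler characteristic `χ = n_σ + n_α + n_φ − n` is even and at most `2`. -/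
theorem euler_char_even_le_two {X : Type*} [Finite X] [Nonempty X]
    (σ α φ : Equiv.Perm X) (hprod : σ * α * φ = 1)
    (htrans : ∀ x y : X, ∃ g ∈ Subgroup.closure ({σ, α} : Set (Equiv.Perm X)), g x = y) :
    Even ((nOrbits σ + nOrbits α + nOrbits φ : ℤ) - Nat.card X) ∧
      (nOrbits σ + nOrbits α + nOrbits φ : ℤ) - Nat.card X ≤ 2 :=
  euler_char_even_le_two_general σ α φ hprod htrans
end
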